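/- arXiv:2401.00548 — 4 statements merged into one kernel-verified Lean document; each statement's English description precedes it below -/
import Mathlib

section
/- For complex numbers a and b, the limit as k → ∞ (over natural numbers k) of k^(b−a) · Γ(k+a)/Γ(k+b) equals 1. -/
open Filter Complex Topology
open scoped Nat

/-!
Euler's limit formula `Γ(s) = lim n ^ s n! / (s (s + 1) ⋯ (s + n))` together with
`Γ(s + n + 1) = Γ(s) s (s + 1) ⋯ (s + n)` says that `n ^ (s + 1) Γ(n) / Γ(n + s + 1) → 1` whenever
`Γ(s) ≠ 0`. By the functional equation, raising `s` by one multiplies `n ^ s Γ(n) / Γ(n + s)` by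
`n / (n + s) → 1`, so the limit `1` propagates down to every `s ∈ ℂ`, including the poles of `Γ`.
The theorem is the quotient of the cases `s = b` and `s = a`.
-/

lemma ascPochhammer_eval_eq_prod_range {R : Type*} [CommSemiring R] (n : ℕ) (r : R) :
    (ascPochhammer R n).eval r = ∏ j ∈ Finset.range n, (r + j) := by
  induction n with
  | zero => simp
  | succ n ih => simp [ascPochhammer_succ_right, ih, Finset.prod_range_succ]

namespace Complex

theorem GammaSeq_eq_mul_Gamma_div {s : ℂ} (hs : ∀ m : ℕ, s ≠ -m) (n : ℕ) :
    GammaSeq s n = (n : ℂ) ^ s * n ! * Gamma s / Gamma (s + (n + 1)) := by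
  have hprod := Gamma_add_nat_div_Gamma_eq (n := n + 1) s hs
  rw [ascPochhammer_eval_eq_prod_range, div_eq_iff (Gamma_ne_zero hs)] at hprod
  push_cast at hprod
  rw [GammaSeq, hprod, mul_div_mul_right _ _ (Gamma_ne_zero hs)]

noncomputable def cpowGammaRatio (s : ℂ) (n : ℕ) : ℂ :=
  (n : ℂ) ^ s * Gamma n / Gamma (n + s)

theorem cpowGammaRatio_add_one (s : ℂ) {n : ℕ} (hn : n ≠ 0) (hns : (n : ℂ) + s ≠ 0) :
    cpowGammaRatio (s + 1) n = n / (n + s) * cpowGammaRatio s n := by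
  have hn' : (n : ℂ) ≠ 0 := Nat.cast_ne_zero.mpr hn
  rw [cpowGammaRatio, cpowGammaRatio, cpow_add _ _ hn', cpow_one, ← add_assoc, Gamma_add_one _ hns]
  field_simp

theorem GammaSeq_div_Gamma {s : ℂ} (hs : ∀ m : ℕ, s ≠ -m) {n : ℕ} (hn : n ≠ 0) :
    GammaSeq s n / Gamma s = cpowGammaRatio (s + 1) n := by
  have hn' : (n : ℂ) ≠ 0 := Nat.cast_ne_zero.mpr hn
  rw [GammaSeq_eq_mul_Gamma_div hs, cpowGammaRatio, cpow_add _ _ hn', cpow_one,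
    ← Gamma_nat_eq_factorial, Gamma_add_one _ hn', show s + (n + 1) = n + (s + 1) by ring]
  field_simp [Gamma_ne_zero hs]

theorem eventually_re_natCast_add_pos (s : ℂ) : ∀ᶠ n : ℕ in atTop, 0 < ((n : ℂ) + s).re := by
  filter_upwards [eventually_gt_atTop ⌈-s.re⌉₊] with n hn
  have := Nat.lt_of_ceil_lt hn
  simp only [add_re, natCast_re]
  linarith

theorem eventually_natCast_add_ne_zero (s : ℂ) : ∀ᶠ n : ℕ in atTop, (n : ℂ) + s ≠ 0 :=
  (eventually_re_natCast_add_pos s).mono fun _ h h0 ↦ by simp [h0] at h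

theorem tendsto_cpowGammaRatio_add_one_iff (s : ℂ) :
    Tendsto (cpowGammaRatio (s + 1)) atTop (𝓝 1) ↔ Tendsto (cpowGammaRatio s) atTop (𝓝 1) := by
  have hlin := tendsto_natCast_div_add_atTop s
  have hrec : cpowGammaRatio (s + 1) =ᶠ[atTop] fun n ↦ n / (n + s) * cpowGammaRatio s n := by
    filter_upwards [eventually_ne_atTop 0, eventually_natCast_add_ne_zero s] with n hn hns
    exact cpowGammaRatio_add_one s hn hns
  constructor
  · intro h
    have := h.div hlin one_ne_zero
    rw [div_one] at this
    refine this.congr' ?_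
    filter_upwards [hrec, eventually_ne_atTop 0, eventually_natCast_add_ne_zero s] with n h hn hns
    rw [Pi.div_apply, h, mul_div_cancel_left₀ _ (div_ne_zero (Nat.cast_ne_zero.mpr hn) hns)]
  · intro h
    simpa using (hlin.mul h).congr' hrec.symm

theorem tendsto_cpowGammaRatio_add_one {s : ℂ} (hs : ∀ m : ℕ, s ≠ -m) :
    Tendsto (cpowGammaRatio (s + 1)) atTop (𝓝 1) := by
  have := (GammaSeq_tendsto_Gamma s).div_const (Gamma s)
  rw [div_self (Gamma_ne_zero hs)] at this
  refine this.congr' ?_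
  filter_upwards [eventually_ne_atTop 0] with n hn
  exact GammaSeq_div_Gamma hs hn

theorem tendsto_cpowGammaRatio_of_add_nat {s : ℂ} (N : ℕ)
    (h : Tendsto (cpowGammaRatio (s + N)) atTop (𝓝 1)) :
    Tendsto (cpowGammaRatio s) atTop (𝓝 1) := by
  induction N with
  | zero => simpa using h
  | succ N ih =>
    rw [Nat.cast_succ, ← add_assoc, tendsto_cpowGammaRatio_add_one_iff] at h
    exact ih h

theorem tendsto_cpowGammaRatio (s : ℂ) : Tendsto (cpowGammaRatio s) atTop (𝓝 1) := by
  obtain ⟨N, hN⟩ := exists_nat_gt (-s.re)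
  have hpos : 0 < (s + N).re := by
    simp only [add_re, natCast_re]
    linarith
  have hs : ∀ m : ℕ, s + N ≠ -m :=
    not_exists.mp <| (Gamma_eq_zero_iff _).not.mp (Gamma_ne_zero_of_re_pos hpos)
  refine tendsto_cpowGammaRatio_of_add_nat (N + 1) ?_
  simpa [add_assoc] using tendsto_cpowGammaRatio_add_one hs

end Complex

theorem gamma_ratio_limit (a b : ℂ) :
    Tendsto (fun k : ℕ => (k : ℂ) ^ (b - a) * Complex.Gamma (k + a) / Complex.Gamma (k + b))
      atTop (nhds 1) := by
  have := (tendsto_cpowGammaRatio b).div (tendsto_cpowGammaRatio a) one_ne_zero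
  rw [div_one] at this
  refine this.congr' ?_
  filter_upwards [eventually_ne_atTop 0, eventually_re_natCast_add_pos a] with k hk ha
  have hk' : (k : ℂ) ≠ 0 := Nat.cast_ne_zero.mpr hk
  have hΓk : Gamma k ≠ 0 := Gamma_ne_zero_of_re_pos (by simpa using Nat.pos_of_ne_zero hk)
  simp only [Pi.div_apply, cpowGammaRatio, cpow_sub _ _ hk']
  field_simp [Gamma_ne_zero_of_re_pos ha, cpow_ne_zero_iff_of_exponent_ne_zero, hk']
end

section
/- Let α ∈ (1/2, 1). Then there exists a positive constant C such that for all n ≥ 0, the sum over j from 0 to n of (Γ(j+α)/Γ(j+1))² is at most C·(n+1)^(2α−1). -/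
/-!
Put `P(x) = Γ(x + α)² / (Γ(x) Γ(x + 1))`. Wendel's inequality `Γ(x + α) ≤ x^α Γ(x)`, a consequence
of the log-convexity of `Γ`, gives `P(x) ≤ x^(2α - 1)`, while the functional equation gives
`P(x + 1) - P(x) = (2α - 1 + (1 - α)² / (x + 1)) (Γ(x + α) / Γ(x + 1))²`. Hence `(2α - 1)` times the
sum of the squared ratios over `j ≥ 1` telescopes to at most `P(n + 1) ≤ (n + 1)^(2α - 1)`.
-/

open Finset Real

namespace Real

theorem Gamma_add_le_rpow_mul_Gamma {x a : ℝ} (hx : 0 < x) (ha₀ : 0 < a) (ha₁ : a < 1) :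
    Gamma (x + a) ≤ x ^ a * Gamma x := by
  have hG := Gamma_pos_of_pos hx
  calc Gamma (x + a) = Gamma ((1 - a) * x + a * (x + 1)) := by ring_nf
    _ ≤ Gamma x ^ (1 - a) * Gamma (x + 1) ^ a :=
        Gamma_mul_add_mul_le_rpow_Gamma_mul_rpow_Gamma hx (by linarith) (by linarith) ha₀
          (by ring)
    _ = x ^ a * Gamma x := by
        rw [Gamma_add_one hx.ne', mul_rpow hx.le hG.le, rpow_sub hG, rpow_one]
        field_simp

end Real

noncomputable def gammaPotential (α x : ℝ) : ℝ :=
  Gamma (x + α) ^ 2 / (Gamma x * Gamma (x + 1))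

lemma gammaPotential_nonneg {α x : ℝ} (hx : 0 < x) : 0 ≤ gammaPotential α x := by
  have := Gamma_pos_of_pos hx
  have := Gamma_pos_of_pos (by linarith : 0 < x + 1)
  unfold gammaPotential
  positivity

lemma gammaPotential_le_rpow {α x : ℝ} (hx : 0 < x) (hα₀ : 0 < α) (hα₁ : α < 1) :
    gammaPotential α x ≤ x ^ (2 * α - 1) := by
  have hG := Gamma_pos_of_pos hx
  have hGα := Gamma_pos_of_pos (by linarith : 0 < x + α)
  rw [gammaPotential, Gamma_add_one hx.ne', div_le_iff₀ (by positivity)]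
  calc Gamma (x + α) ^ 2 ≤ (x ^ α * Gamma x) ^ 2 :=
        pow_le_pow_left₀ hGα.le (Gamma_add_le_rpow_mul_Gamma hx hα₀ hα₁) 2
    _ = x ^ (2 * α - 1) * (Gamma x * (x * Gamma x)) := by
        rw [rpow_sub hx, rpow_one, mul_comm 2 α, rpow_mul hx.le, rpow_two]
        field_simp

lemma gammaPotential_add_one_sub {α x : ℝ} (hx : 0 < x) (hxα : x + α ≠ 0) :
    gammaPotential α (x + 1) - gammaPotential α x
      = (2 * α - 1 + (1 - α) ^ 2 / (x + 1)) * (Gamma (x + α) / Gamma (x + 1)) ^ 2 := by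
  have hG := Gamma_pos_of_pos hx
  have hx1 : x + 1 ≠ 0 := by positivity
  have hshift : x + 1 + α = x + α + 1 := by ring
  rw [gammaPotential, gammaPotential, hshift, Gamma_add_one hxα, Gamma_add_one hx1,
    Gamma_add_one hx.ne']
  field_simp
  ring

lemma mul_sq_Gamma_div_le_gammaPotential_sub {α x : ℝ} (hx : 0 < x) (hxα : x + α ≠ 0) :
    (2 * α - 1) * (Gamma (x + α) / Gamma (x + 1)) ^ 2
      ≤ gammaPotential α (x + 1) - gammaPotential α x := by
  rw [gammaPotential_add_one_sub hx hxα]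
  gcongr
  have : 0 < x + 1 := by linarith
  linarith [show 0 ≤ (1 - α) ^ 2 / (x + 1) by positivity]

lemma mul_sum_sq_Gamma_div_le {α : ℝ} (hα₀ : 0 < α) (hα₁ : α < 1) (n : ℕ) :
    (2 * α - 1) * ∑ i ∈ range n, (Gamma ((i : ℝ) + 1 + α) / Gamma ((i : ℝ) + 1 + 1)) ^ 2
      ≤ ((n : ℝ) + 1) ^ (2 * α - 1) := by
  calc (2 * α - 1) * ∑ i ∈ range n, (Gamma ((i : ℝ) + 1 + α) / Gamma ((i : ℝ) + 1 + 1)) ^ 2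
      ≤ ∑ i ∈ range n, (gammaPotential α ((i + 1 : ℕ) + 1) - gammaPotential α ((i : ℕ) + 1)) := by
        rw [mul_sum]
        gcongr with i
        push_cast
        exact mul_sq_Gamma_div_le_gammaPotential_sub (by positivity) (by positivity)
    _ = gammaPotential α ((n : ℝ) + 1) - gammaPotential α 1 := by
        rw [sum_range_sub (fun i : ℕ => gammaPotential α ((i : ℝ) + 1))]
        simp
    _ ≤ ((n : ℝ) + 1) ^ (2 * α - 1) := by
        linarith [gammaPotential_nonneg (α := α) one_pos,
          gammaPotential_le_rpow (by positivity : (0 : ℝ) < n + 1) hα₀ hα₁]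

theorem gamma_ratio_sum_bound (α : ℝ) (hα : α ∈ Set.Ioo (1/2 : ℝ) 1) :
    ∃ C : ℝ, 0 < C ∧ ∀ n : ℕ,
      ∑ j ∈ Finset.range (n + 1), (Real.Gamma (j + α) / Real.Gamma (j + 1)) ^ 2
        ≤ C * (n + 1 : ℝ) ^ (2 * α - 1) := by
  obtain ⟨hα₀, hα₁⟩ := hα
  have hp : 0 < 2 * α - 1 := by linarith
  refine ⟨Gamma α ^ 2 + 1 / (2 * α - 1), by positivity, fun n => ?_⟩
  have hS := (le_div_iff₀' hp).mpr (mul_sum_sq_Gamma_div_le (by linarith) hα₁ n)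
  have one_le : 1 ≤ ((n : ℝ) + 1) ^ (2 * α - 1) := one_le_rpow (by linarith) hp.le
  rw [sum_range_succ']
  push_cast
  rw [zero_add, zero_add, Gamma_one, div_one]
  calc _ ≤ ((n : ℝ) + 1) ^ (2 * α - 1) / (2 * α - 1)
          + Gamma α ^ 2 * ((n : ℝ) + 1) ^ (2 * α - 1) :=
        add_le_add hS (le_mul_of_one_le_right (sq_nonneg _) one_le)
    _ = _ := by ring
end

section
/- Let μ be a nonzero finite nonnegative Borel measure on the unit circle and m ≥ 1. The space Ĥ_{μ,m} of holomorphic functions f(z) = Σ_{j≥m} aⱼzʲ on the unit disc with D_{μ,m}(f) < ∞, equipped with the norm √D_{μ,m}(·), is a reproducing kernel Hilbert space on the unit disc; i.e., point evaluations at every point of the disc are bounded linear functionals. -/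
open Metric MeasureTheory
open scoped ENNReal NNReal

/-- Normalized Lebesgue area measure on the unit disc (total mass 1). -/
noncomputable def normArea : Measure ℂ :=
  (ENNReal.ofReal (1 / Real.pi)) • (MeasureTheory.volume.restrict (ball (0 : ℂ) 1))

/-- The Poisson integral of a measure `μ` on the unit circle. -/
noncomputable def poisson (μ : Measure ℂ) (z : ℂ) : ℝ :=
  ∫ ζ, (1 - ‖z‖ ^ 2) / ‖z - ζ‖ ^ 2 ∂μ

/-- The weighted Dirichlet-type integral of order `m` of `f` with respect to `μ`. -/
noncomputable def Dmu (μ : Measure ℂ) (m : ℕ) (f : ℂ → ℂ) : ℝ≥0∞ :=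
  ENNReal.ofReal (1 / (m.factorial * (m - 1).factorial)) *
    ∫⁻ z, (‖iteratedDeriv m f z‖₊ : ℝ≥0∞) ^ 2 *
      ENNReal.ofReal (poisson μ z * (1 - ‖z‖ ^ 2) ^ (m - 1)) ∂normArea

/-!
Fix `w` in the disc and put `g = f⁽ᵐ⁾`. On the circle the Poisson kernel is at least
`(1 - |z|²) / 4`, so the weight `P_μ(z) (1 - |z|²)^(m-1)` is bounded below by a positive constant
on every disc `B(z₀, R)` with `|z₀| ≤ |w|` and `R = (1 - |w|) / 2`. The sub-mean value property of
the holomorphic function `g²` over such a disc then gives `|g(z₀)|² ≤ C · D_{μ,m}(f)`. Since `f`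
vanishes to order `m` at the origin, `m` applications of the mean value inequality on the disc of
radius `|w| ≤ 1` carry this bound from `g` down to `f(w)`.
-/

open Set Filter
open scoped Real Nat

section PowerSeries

variable {𝕜 : Type*} [RCLike 𝕜] {f : 𝕜 → 𝕜} {a : ℕ → 𝕜}

theorem hasFPowerSeriesOnBall_ofScalars_of_hasSum {r : ℝ≥0} (hr : 0 < r)
    (h : ∀ z ∈ ball (0 : 𝕜) r, HasSum (fun n => a n * z ^ n) (f z)) :
    HasFPowerSeriesOnBall f (FormalMultilinearSeries.ofScalars 𝕜 a) 0 r where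
  r_le := by
    refine ENNReal.le_of_forall_nnreal_lt fun s hs => ?_
    have hs' : ((s : ℝ) : 𝕜) ∈ ball (0 : 𝕜) r := by
      simpa using (show (s : ℝ) < r by exact_mod_cast hs)
    refine FormalMultilinearSeries.le_radius_of_tendsto _ (l := 0) ?_
    simpa [norm_mul, norm_pow] using (h _ hs').summable.tendsto_atTop_zero.norm
  r_pos := by simpa using hr
  hasSum := fun {y} hy => by
    rw [zero_add, FormalMultilinearSeries.ofScalars_apply_eq']
    exact h y (by simpa using hy)

theorem HasFPowerSeriesOnBall.iteratedDeriv_ofScalars {x : 𝕜} {r : ℝ≥0∞}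
    (h : HasFPowerSeriesOnBall f (FormalMultilinearSeries.ofScalars 𝕜 a) x r) (n : ℕ) :
    iteratedDeriv n f x = n ! • a n := by
  rw [iteratedDeriv_eq_iteratedFDeriv, ← h.factorial_smul,
    FormalMultilinearSeries.ofScalars_apply_eq, one_pow, smul_eq_mul, mul_one]

theorem AnalyticOnNhd.iteratedDeriv {s : Set 𝕜} (h : AnalyticOnNhd 𝕜 f s) (n : ℕ) :
    AnalyticOnNhd 𝕜 (iteratedDeriv n f) s := by
  simpa only [iteratedDeriv_eq_iterate] using h.iterated_deriv n

end PowerSeries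

theorem Convex.norm_le_of_norm_iteratedDeriv_le {𝕜 F : Type*} [RCLike 𝕜] [NormedAddCommGroup F]
    [NormedSpace 𝕜 F] {s : Set 𝕜} (hs : Convex ℝ s) (h0 : 0 ∈ s) (hs1 : ∀ z ∈ s, ‖z‖ ≤ 1)
    {n : ℕ} {f : 𝕜 → F} {B : ℝ}
    (hf : ∀ k < n, ∀ z ∈ s, DifferentiableAt 𝕜 (iteratedDeriv k f) z)
    (hf0 : ∀ k < n, iteratedDeriv k f 0 = 0) (hB : ∀ z ∈ s, ‖iteratedDeriv n f z‖ ≤ B) :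
    ∀ z ∈ s, ‖f z‖ ≤ B := by
  induction n generalizing f with
  | zero => simpa using hB
  | succ n ih =>
    have hderiv : ∀ z ∈ s, ‖deriv f z‖ ≤ B := by
      refine ih (fun k hk => ?_) (fun k hk => ?_) (by simpa [iteratedDeriv_succ'] using hB)
      · simpa [iteratedDeriv_succ'] using hf (k + 1) (by omega)
      · simpa [iteratedDeriv_succ'] using hf0 (k + 1) (by omega)
    intro z hz
    have hmvt := hs.norm_image_sub_le_of_norm_deriv_le (by simpa using hf 0 n.succ_pos) hderiv
      h0 hz
    rw [(by simpa using hf0 0 n.succ_pos : f 0 = 0), sub_zero, sub_zero] at hmvt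
    have hB0 : 0 ≤ B := (norm_nonneg _).trans (hderiv 0 h0)
    exact hmvt.trans (mul_le_of_le_one_right hB0 (hs1 z hz))

theorem poissonKernel_bounds {z ζ : ℂ} (hz : ‖z‖ < 1) (hζ : ‖ζ‖ = 1) :
    (1 - ‖z‖ ^ 2) / 4 ≤ (1 - ‖z‖ ^ 2) / ‖z - ζ‖ ^ 2 ∧
      (1 - ‖z‖ ^ 2) / ‖z - ζ‖ ^ 2 ≤ (1 - ‖z‖ ^ 2) / (1 - ‖z‖) ^ 2 := by
  have hnum : 0 ≤ 1 - ‖z‖ ^ 2 := by nlinarith [norm_nonneg z]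
  have hlow : 1 - ‖z‖ ≤ ‖z - ζ‖ := by
    simpa [hζ, norm_sub_rev] using norm_sub_norm_le ζ z
  have hup : ‖z - ζ‖ ≤ 2 := by linarith [norm_sub_le z ζ]
  constructor
  · exact div_le_div_of_nonneg_left hnum (by nlinarith) (by nlinarith)
  · exact div_le_div_of_nonneg_left hnum (by nlinarith) (by nlinarith)

theorem le_poisson (μ : Measure ℂ) [IsFiniteMeasure μ] (hsupp : μ (sphere (0 : ℂ) 1)ᶜ = 0)
    {z : ℂ} (hz : ‖z‖ < 1) :
    (1 - ‖z‖ ^ 2) / 4 * μ.real univ ≤ poisson μ z := by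
  have hsphere : ∀ᵐ ζ ∂μ, ‖ζ‖ = 1 :=
    measure_mono_null (fun ζ hζ => by simpa using hζ) hsupp
  have hint : Integrable (fun ζ : ℂ => (1 - ‖z‖ ^ 2) / ‖z - ζ‖ ^ 2) μ := by
    refine Integrable.of_bound (by fun_prop : Measurable _).aestronglyMeasurable
      ((1 - ‖z‖ ^ 2) / (1 - ‖z‖) ^ 2) ?_
    filter_upwards [hsphere] with ζ hζ
    rw [Real.norm_of_nonneg (div_nonneg (by nlinarith [norm_nonneg z]) (sq_nonneg _))]
    exact (poissonKernel_bounds hz hζ).2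
  calc (1 - ‖z‖ ^ 2) / 4 * μ.real univ = ∫ _, (1 - ‖z‖ ^ 2) / 4 ∂μ := by
        rw [integral_const, smul_eq_mul, mul_comm]
    _ ≤ poisson μ z := integral_mono_ae (integrable_const _) hint
        (hsphere.mono fun ζ hζ => (poissonKernel_bounds hz hζ).1)

theorem le_poisson_mul_pow (μ : Measure ℂ) [IsFiniteMeasure μ]
    (hsupp : μ (sphere (0 : ℂ) 1)ᶜ = 0) {r : ℝ} (hr : r < 1) (n : ℕ) {z : ℂ} (hz : ‖z‖ ≤ r) :
    (1 - r ^ 2) ^ (n + 1) / 4 * μ.real univ ≤ poisson μ z * (1 - ‖z‖ ^ 2) ^ n := by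
  have hzr : 1 - r ^ 2 ≤ 1 - ‖z‖ ^ 2 := by nlinarith [norm_nonneg z]
  have hr2 : 0 ≤ 1 - r ^ 2 := by nlinarith [norm_nonneg z]
  have hpoisson := le_poisson μ hsupp (hz.trans_lt hr)
  calc (1 - r ^ 2) ^ (n + 1) / 4 * μ.real univ
      = (1 - r ^ 2) / 4 * μ.real univ * (1 - r ^ 2) ^ n := by ring
    _ ≤ (1 - ‖z‖ ^ 2) / 4 * μ.real univ * (1 - ‖z‖ ^ 2) ^ n :=
        mul_le_mul (by gcongr) (pow_le_pow_left₀ hr2 hzr n) (pow_nonneg hr2 n)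
          (mul_nonneg (div_nonneg (hr2.trans hzr) zero_le_four) measureReal_nonneg)
    _ ≤ poisson μ z * (1 - ‖z‖ ^ 2) ^ n :=
        mul_le_mul_of_nonneg_right hpoisson (pow_nonneg (hr2.trans hzr) n)

theorem integral_Ioo_circleMap_eq_two_pi_smul {g : ℂ → ℂ} {c : ℂ} {r : ℝ} (hr : 0 ≤ r)
    (hg : DifferentiableOn ℂ g (closedBall c r)) :
    ∫ θ in Ioo (-π) π, g (circleMap c r θ) = (2 * π) • g c := by
  have hmean := (hg.diffContOnCl_ball (by rw [abs_of_nonneg hr])).circleAverage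
  rw [Real.circleAverage_eq_integral_add (-π), intervalIntegral.integral_comp_add_right
    (fun θ => g (circleMap c r θ)), zero_add, show 2 * π + -π = π by ring,
    intervalIntegral.integral_of_le (by linarith [Real.pi_pos]),
    integral_Ioc_eq_integral_Ioo] at hmean
  rw [← hmean, smul_smul, mul_inv_cancel₀ (by positivity), one_smul]

theorem ofReal_two_pi_mul_enorm_le_setLIntegral_circleMap {g : ℂ → ℂ} {c : ℂ} {r : ℝ} (hr : 0 ≤ r)
    (hg : DifferentiableOn ℂ g (closedBall c r)) :
    ENNReal.ofReal (2 * π) * ‖g c‖ₑ ≤ ∫⁻ θ in Ioo (-π) π, ‖g (circleMap c r θ)‖ₑ := by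
  calc ENNReal.ofReal (2 * π) * ‖g c‖ₑ = ‖∫ θ in Ioo (-π) π, g (circleMap c r θ)‖ₑ := by
        rw [integral_Ioo_circleMap_eq_two_pi_smul hr hg, enorm_smul, Real.enorm_of_nonneg (by positivity)]
    _ ≤ _ := enorm_integral_le_lintegral_enorm _

theorem setLIntegral_Ioo_ofReal_id {R : ℝ} (hR : 0 ≤ R) :
    ∫⁻ r in Ioo 0 R, ENNReal.ofReal r = ENNReal.ofReal (R ^ 2 / 2) := by
  rw [← ofReal_integral_eq_lintegral_ofReal, ← integral_Ioc_eq_integral_Ioo,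
    ← intervalIntegral.integral_of_le hR, integral_id]
  · ring_nf
  · exact continuous_id.integrableOn_Icc.mono_set Ioo_subset_Icc_self
  · exact (ae_restrict_iff' measurableSet_Ioo).2 (Eventually.of_forall fun r hr => hr.1.le)

theorem setLIntegral_polar_le_setLIntegral_ball (F : ℂ → ℝ≥0∞) (c : ℂ) (R : ℝ) :
    ∫⁻ p in Ioo 0 R ×ˢ Ioo (-π) π, ENNReal.ofReal p.1 * F (circleMap c p.1 p.2) ≤
      ∫⁻ z in ball c R, F z := by
  calc ∫⁻ p in Ioo 0 R ×ˢ Ioo (-π) π, ENNReal.ofReal p.1 * F (circleMap c p.1 p.2)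
      = ∫⁻ p in Ioo 0 R ×ˢ Ioo (-π) π,
          ENNReal.ofReal p.1 • (ball c R).indicator F (c + Complex.polarCoord.symm p) := by
        refine setLIntegral_congr_fun (measurableSet_Ioo.prod measurableSet_Ioo) fun p hp => ?_
        have hcircle : c + Complex.polarCoord.symm p = circleMap c p.1 p.2 := by
          simp [circleMap, Complex.exp_mul_I]
        have hmem : circleMap c p.1 p.2 ∈ ball c R := by
          rw [mem_ball, dist_eq_norm, circleMap_sub_center, norm_circleMap_zero,
            abs_of_pos hp.1.1]
          exact hp.1.2
        rw [hcircle, indicator_of_mem hmem, smul_eq_mul]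
    _ ≤ ∫⁻ p in polarCoord.target,
          ENNReal.ofReal p.1 • (ball c R).indicator F (c + Complex.polarCoord.symm p) :=
        lintegral_mono_set (prod_mono Ioo_subset_Ioi_self subset_rfl)
    _ = ∫⁻ z in ball c R, F z := by
        rw [Complex.lintegral_comp_polarCoord_symm (fun z => (ball c R).indicator F (c + z)),
          lintegral_add_left_eq_self, lintegral_indicator measurableSet_ball]

-- The mean value property on each circle `|z - c| = r`, integrated in polar coordinates.
theorem volume_ball_mul_enorm_le_setLIntegral_enorm {g : ℂ → ℂ} {c : ℂ} {R : ℝ}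
    (hg : DifferentiableOn ℂ g (closedBall c R)) :
    volume (ball c R) * ‖g c‖ₑ ≤ ∫⁻ z in ball c R, ‖g z‖ₑ := by
  rcases le_or_gt R 0 with hR | hR
  · simp [ball_eq_empty.2 hR]
  have hmeas : AEMeasurable (fun p : ℝ × ℝ => ENNReal.ofReal p.1 * ‖g (circleMap c p.1 p.2)‖ₑ)
      ((volume.prod volume).restrict (Ioo 0 R ×ˢ Ioo (-π) π)) := by
    refine measurable_fst.ennreal_ofReal.aemeasurable.mul (AEMeasurable.enorm ?_)
    refine ContinuousOn.aemeasurable ?_ (measurableSet_Ioo.prod measurableSet_Ioo)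
    refine hg.continuousOn.comp (Real.circleMap.continuous (c := c)).continuousOn fun p hp => ?_
    rw [mem_closedBall, dist_eq_norm, circleMap_sub_center, norm_circleMap_zero,
      abs_of_pos hp.1.1]
    exact hp.1.2.le
  calc volume (ball c R) * ‖g c‖ₑ
      = ∫⁻ r in Ioo 0 R, ENNReal.ofReal r * (ENNReal.ofReal (2 * π) * ‖g c‖ₑ) := by
        rw [lintegral_mul_const' _ _ (by finiteness), setLIntegral_Ioo_ofReal_id hR.le,
          Complex.volume_ball, ← mul_assoc, ← ENNReal.ofReal_mul (by positivity),
          ← ENNReal.ofReal_pow hR.le, ← ENNReal.ofReal_coe_nnreal, NNReal.coe_real_pi,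
          ← ENNReal.ofReal_mul (by positivity)]
        ring_nf
    _ ≤ ∫⁻ r in Ioo 0 R, ∫⁻ θ in Ioo (-π) π, ENNReal.ofReal r * ‖g (circleMap c r θ)‖ₑ := by
        refine setLIntegral_mono' measurableSet_Ioo fun r hr => ?_
        rw [lintegral_const_mul' _ _ ENNReal.ofReal_ne_top]
        gcongr
        exact ofReal_two_pi_mul_enorm_le_setLIntegral_circleMap hr.1.le
          (hg.mono (closedBall_subset_closedBall hr.2.le))
    _ = ∫⁻ p in Ioo 0 R ×ˢ Ioo (-π) π, ENNReal.ofReal p.1 * ‖g (circleMap c p.1 p.2)‖ₑ := by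
        rw [Measure.volume_eq_prod, setLIntegral_prod _ hmeas]
    _ ≤ ∫⁻ z in ball c R, ‖g z‖ₑ := setLIntegral_polar_le_setLIntegral_ball _ c R

theorem ofReal_mul_enorm_sq_le_Dmu (μ : Measure ℂ) {m : ℕ} {f : ℂ → ℂ} {z₀ : ℂ} {R δ : ℝ}
    (hR : 0 ≤ R) (hf : DifferentiableOn ℂ (iteratedDeriv m f) (closedBall z₀ R))
    (hball : ball z₀ R ⊆ ball 0 1)
    (hδ : ∀ z ∈ ball z₀ R, δ ≤ poisson μ z * (1 - ‖z‖ ^ 2) ^ (m - 1)) :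
    ENNReal.ofReal (R ^ 2 / (m ! * (m - 1)!) * δ) * ‖iteratedDeriv m f z₀‖ₑ ^ 2 ≤
      Dmu μ m f := by
  set g := iteratedDeriv m f
  have hmean : volume (ball z₀ R) * ‖g z₀‖ₑ ^ 2 ≤ ∫⁻ z in ball z₀ R, ‖g z‖ₑ ^ 2 := by
    simpa only [Pi.pow_apply, enorm_pow] using
      volume_ball_mul_enorm_le_setLIntegral_enorm (hf.pow 2)
  calc ENNReal.ofReal (R ^ 2 / (m ! * (m - 1)!) * δ) * ‖g z₀‖ₑ ^ 2
      = ENNReal.ofReal (1 / (m ! * (m - 1)!)) * (ENNReal.ofReal (1 / π) *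
          (volume (ball z₀ R) * ‖g z₀‖ₑ ^ 2 * ENNReal.ofReal δ)) := by
        rw [Complex.volume_ball, ← ENNReal.ofReal_pow hR, ← ENNReal.ofReal_coe_nnreal,
          NNReal.coe_real_pi, show R ^ 2 / (m ! * (m - 1)!) * δ =
            1 / (m ! * (m - 1)!) * (1 / π * (R ^ 2 * π * δ)) by field_simp,
          ENNReal.ofReal_mul (by positivity), ENNReal.ofReal_mul (by positivity),
          ENNReal.ofReal_mul (by positivity), ENNReal.ofReal_mul (by positivity)]
        ring
    _ ≤ ENNReal.ofReal (1 / (m ! * (m - 1)!)) * (ENNReal.ofReal (1 / π) *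
          ∫⁻ z in ball z₀ R, ‖g z‖ₑ ^ 2 * ENNReal.ofReal δ) := by
        rw [lintegral_mul_const' _ _ ENNReal.ofReal_ne_top]
        gcongr
    _ ≤ ENNReal.ofReal (1 / (m ! * (m - 1)!)) * (ENNReal.ofReal (1 / π) *
          ∫⁻ z in ball 0 1, ‖g z‖ₑ ^ 2 *
            ENNReal.ofReal (poisson μ z * (1 - ‖z‖ ^ 2) ^ (m - 1))) := by
        gcongr _ * (_ * ?_)
        refine (setLIntegral_mono' measurableSet_ball fun z hz => ?_).trans
          (lintegral_mono_set hball)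
        gcongr
        exact hδ z hz
    _ = Dmu μ m f := by
        rw [Dmu, normArea, lintegral_smul_measure, smul_eq_mul]
        rfl

theorem exists_pos_ofReal_mul_enorm_iteratedDeriv_sq_le_Dmu (μ : Measure ℂ) [IsFiniteMeasure μ]
    (hsupp : μ (sphere (0 : ℂ) 1)ᶜ = 0) (hμ : μ ≠ 0) (m : ℕ) {ρ : ℝ} (hρ₀ : 0 ≤ ρ)
    (hρ : ρ < 1) :
    ∃ ε > 0, ∀ f : ℂ → ℂ, AnalyticOnNhd ℂ f (ball 0 1) → ∀ z₀ ∈ closedBall (0 : ℂ) ρ,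
      ENNReal.ofReal ε * ‖iteratedDeriv m f z₀‖ₑ ^ 2 ≤ Dmu μ m f := by
  have : NeZero μ := ⟨hμ⟩
  set R := (1 - ρ) / 2 with hR_def
  set r := ρ + R with hr_def
  have hR : 0 < R := by linarith
  have hr : r < 1 := by linarith
  have hr2 : 0 < 1 - r ^ 2 := by nlinarith
  refine ⟨R ^ 2 / (m ! * (m - 1)!) * ((1 - r ^ 2) ^ (m - 1 + 1) / 4 * μ.real univ),
    by have := measureReal_univ_pos (μ := μ); positivity, fun f hf z₀ hz₀ => ?_⟩
  rw [mem_closedBall_zero_iff] at hz₀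
  have hnear : closedBall z₀ R ⊆ closedBall 0 r :=
    closedBall_subset_closedBall' (by rw [dist_zero_right]; linarith)
  have hdisc : closedBall z₀ R ⊆ ball 0 1 := hnear.trans (closedBall_subset_ball hr)
  exact ofReal_mul_enorm_sq_le_Dmu μ hR.le ((hf.iteratedDeriv m).differentiableOn.mono hdisc)
    (ball_subset_closedBall.trans hdisc) fun z hz => le_poisson_mul_pow μ hsupp hr (m - 1)
      (mem_closedBall_zero_iff.1 (hnear (ball_subset_closedBall hz)))

theorem norm_le_sqrt_toReal_div_of_ofReal_mul_enorm_sq_le {E : Type*} [NormedAddCommGroup E]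
    {x : E} {ε : ℝ} {D : ℝ≥0∞} (hε : 0 < ε) (hD : D ≠ ⊤)
    (h : ENNReal.ofReal ε * ‖x‖ₑ ^ 2 ≤ D) : ‖x‖ ≤ √(D.toReal / ε) := by
  rw [← ofReal_norm, ← ENNReal.ofReal_pow (norm_nonneg _), ← ENNReal.ofReal_mul hε.le,
    ENNReal.ofReal_le_iff_le_toReal hD] at h
  exact Real.le_sqrt_of_sq_le (by rw [le_div_iff₀ hε]; linarith)

theorem eval_bounded_general (μ : Measure ℂ) [IsFiniteMeasure μ]
    (hsupp : μ (sphere (0 : ℂ) 1)ᶜ = 0) (hμ : μ ≠ 0) (m : ℕ) :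
    ∀ w ∈ ball (0 : ℂ) 1, ∃ C : ℝ, 0 < C ∧
      ∀ (f : ℂ → ℂ) (a : ℕ → ℂ),
        (∀ z ∈ ball (0 : ℂ) 1, HasSum (fun j => a j * z ^ j) (f z)) →
        (∀ j < m, a j = 0) →
        Dmu μ m f ≠ ⊤ →
        ENNReal.ofReal (‖f w‖ ^ 2) ≤ ENNReal.ofReal C * Dmu μ m f := by
  intro w hw
  rw [mem_ball_zero_iff] at hw
  obtain ⟨ε, hε, hDε⟩ := exists_pos_ofReal_mul_enorm_iteratedDeriv_sq_le_Dmu μ hsupp hμ m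
    (norm_nonneg w) hw
  refine ⟨1 / ε, by positivity, fun f a hf ha hD => ?_⟩
  have hp := hasFPowerSeriesOnBall_ofScalars_of_hasSum (f := f) (a := a) (r := 1) one_pos
    fun z hz => hf z (by simpa using hz)
  have hA : AnalyticOnNhd ℂ f (ball 0 1) := by
    simpa only [eball_coe, NNReal.coe_one] using hp.analyticOnNhd
  have hfw : ‖f w‖ ≤ √((Dmu μ m f).toReal / ε) :=
    (convex_closedBall 0 ‖w‖).norm_le_of_norm_iteratedDeriv_le
      (mem_closedBall_self (norm_nonneg w)) (fun z hz => (mem_closedBall_zero_iff.1 hz).trans hw.le)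
      (fun k _ z hz => (hA.iteratedDeriv k z (closedBall_subset_ball hw hz)).differentiableAt)
      (fun k hk => by rw [hp.iteratedDeriv_ofScalars, ha k hk, smul_zero])
      (fun z hz => norm_le_sqrt_toReal_div_of_ofReal_mul_enorm_sq_le hε hD (hDε f hA z hz))
      w (mem_closedBall_zero_iff.2 le_rfl)
  calc ENNReal.ofReal (‖f w‖ ^ 2) ≤ ENNReal.ofReal ((Dmu μ m f).toReal / ε) := by
        gcongr
        rw [← Real.sq_sqrt (by positivity : 0 ≤ (Dmu μ m f).toReal / ε)]
        gcongr
    _ = ENNReal.ofReal (1 / ε) * Dmu μ m f := by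
        rw [div_eq_mul_one_div, mul_comm, ENNReal.ofReal_mul (by positivity),
          ENNReal.ofReal_toReal hD]

/-- The space `Ĥ_{μ,m}`, with the squared semi-norm `D_{μ,m}`, is a reproducing kernel
Hilbert space on the unit disc: evaluation at each point of the disc is a bounded
linear functional. -/
theorem eval_bounded (μ : Measure ℂ) [IsFiniteMeasure μ]
    (hsupp : μ (sphere (0 : ℂ) 1)ᶜ = 0) (hμ : μ ≠ 0) (m : ℕ) (hm : 1 ≤ m) :
    ∀ w ∈ ball (0 : ℂ) 1, ∃ C : ℝ, 0 < C ∧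
      ∀ (f : ℂ → ℂ) (a : ℕ → ℂ),
        (∀ z ∈ ball (0 : ℂ) 1, HasSum (fun j => a j * z ^ j) (f z)) →
        (∀ j < m, a j = 0) →
        Dmu μ m f ≠ ⊤ →
        ENNReal.ofReal (‖f w‖ ^ 2) ≤ ENNReal.ofReal C * Dmu μ m f :=
  eval_bounded_general μ hsupp hμ m
end

section
/- Let m ≥ 1 and define cₙ = 1 if n is odd and cₙ = 0 if n is even. For every even n ≥ m, the operator A_c(m) acting on z^n (sending Σbⱼzʲ to Σⱼ(c_{j+1}bⱼ + Σ_{k>j}(c_{k+1}−cₖ)bₖ)zʲ) satisfies ‖A_c(m)(zⁿ)‖²_{σ,m−1} = Σ_{k=m−1}^{n} C(k, m−1) = C(n+1, m), where ‖·‖_{σ,m−1} is the norm on Ĥ_{σ,m−1}. -/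
/-!
Only the `k = n` term survives in the tail sum of `A_c(m)(zⁿ)`, and there `c_{n+1} - c_n = 1`,
so `A_c(m)(zⁿ) = Σ_{j ≤ n} zʲ`. Its squared norm is then `Σ_{k=m-1}^{n} C(k, m-1)`, which the
hockey-stick identity evaluates to `C(n+1, m)`.
-/

open Finset

/-- The action of the operator `A_c(m)` on a coefficient sequence `b = (b_j)_{j ≥ m-1}`:
the `j`-th coefficient of the image is `c_{j+1} b_j + Σ_{k≥j+1} (c_{k+1} - c_k) b_k`. -/
noncomputable def AcCoef (c b : ℕ → ℝ) (j : ℕ) : ℝ :=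
  c (j + 1) * b j + ∑' k : ℕ, if j + 1 ≤ k then (c (k + 1) - c k) * b k else 0

/-- The squared norm of `Ĥ_{σ,m-1}` applied to a coefficient sequence supported on
`{j : j ≥ m-1}`: `Σ_{j ≥ m-1} C(j, m-1) |b_j|²`. -/
noncomputable def normSqSigma (m : ℕ) (b : ℕ → ℝ) : ℝ :=
  ∑' j : ℕ, if m - 1 ≤ j then (j.choose (m - 1) : ℝ) * (b j) ^ 2 else 0

theorem AcCoef_monomial (c : ℕ → ℝ) (n j : ℕ) :
    AcCoef c (fun k => if k = n then 1 else 0) j =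
      (if j = n then c (n + 1) else 0) + if j < n then c (n + 1) - c n else 0 := by
  have htail : (∑' k : ℕ, if j + 1 ≤ k then (c (k + 1) - c k) * (if k = n then 1 else 0) else 0)
      = ∑' k : ℕ, if k = n then (if j < n then c (n + 1) - c n else 0) else 0 := by
    congr 1
    funext k
    by_cases hk : k = n
    · subst hk; by_cases hj : j < k <;> simp [hj]
    · simp [hk]
  rw [AcCoef, htail, tsum_ite_eq]
  by_cases hj : j = n <;> simp [hj]

theorem AcCoef_monomial_of_jump {c : ℕ → ℝ} {n : ℕ} (hn : c n = 0) (hn1 : c (n + 1) = 1) :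
    AcCoef c (fun k => if k = n then 1 else 0) = fun j => if j ≤ n then 1 else 0 := by
  funext j
  rw [AcCoef_monomial, hn, hn1]
  rcases lt_trichotomy j n with h | rfl | h
  · simp [h, h.ne, h.le]
  · simp
  · simp [h.ne', h.not_gt, h.not_ge]

theorem normSqSigma_indicator_le (m n : ℕ) :
    normSqSigma m (fun j => if j ≤ n then 1 else 0) =
      ∑ k ∈ Icc (m - 1) n, (k.choose (m - 1) : ℝ) := by
  rw [normSqSigma, tsum_eq_sum (s := Icc (m - 1) n)]
  · refine sum_congr rfl fun j hj => ?_
    obtain ⟨hmj, hjn⟩ := mem_Icc.mp hj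
    simp [hmj, hjn]
  · intro j hj
    rw [mem_Icc, not_and_or, not_le, not_le] at hj
    rcases hj with h | h <;> simp [h.not_ge]

theorem norm_Ac_monomial_general (m : ℕ) (hm : 1 ≤ m) (c : ℕ → ℝ)
    (hc : ∀ k, c k = if Odd k then 1 else 0)
    (n : ℕ) (hn : Even n) :
    normSqSigma m (AcCoef c (fun k => if k = n then 1 else 0)) =
        ∑ k ∈ Finset.Icc (m - 1) n, (k.choose (m - 1) : ℝ) ∧
      normSqSigma m (AcCoef c (fun k => if k = n then 1 else 0)) =
        ((n + 1).choose m : ℝ) := by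
  have hcn : c n = 0 := by simp [hc, Nat.not_odd_iff_even.mpr hn]
  have hcn1 : c (n + 1) = 1 := by simp [hc, hn.add_one]
  have hnorm := (AcCoef_monomial_of_jump hcn hcn1).symm ▸ normSqSigma_indicator_le m n
  refine ⟨hnorm, hnorm.trans ?_⟩
  rw [← Nat.cast_sum, Nat.sum_Icc_choose, Nat.sub_add_cancel hm]

theorem norm_Ac_monomial (m : ℕ) (hm : 1 ≤ m) (c : ℕ → ℝ)
    (hc : ∀ k, c k = if Odd k then 1 else 0)
    (n : ℕ) (hn : Even n) (hnm : m ≤ n) :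
    normSqSigma m (AcCoef c (fun k => if k = n then 1 else 0)) =
        ∑ k ∈ Finset.Icc (m - 1) n, (k.choose (m - 1) : ℝ) ∧
      normSqSigma m (AcCoef c (fun k => if k = n then 1 else 0)) =
        ((n + 1).choose m : ℝ) :=
  norm_Ac_monomial_general m hm c hc n hn
end
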